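/- Let b < 0 and f(t) = (1/(t−b), 1/(t−b)²)ᵀ for t ∈ [0,∞). (i) The design assigning mass (2−√2)/4 to the point 0 and mass (2+√2)/4 to the point −√2·b minimizes the (1,1) entry of M(ξ)⁻¹ among all designs ξ on [0,∞) with invertible information matrix. (ii) The design assigning mass 1−1/√2 to the point 0 and mass 1/√2 to the point −√2·b minimizes the (2,2) entry of M(ξ)⁻¹ among all designs ξ on [0,∞) with invertible information matrix. -/

import Mathlib

/-!
Let `N` be the information matrix of a design supported in `[0, ∞)`. If `|d ⬝ f(t)| ≤ 1` on
`[0, ∞)` then `dᵀ N d ≤ 1`, and Cauchy–Schwarz for the form of `N` gives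
`(c ⬝ d)² ≤ (cᵀ N⁻¹ c) (dᵀ N d)`; with `c = e_j` this is the lower bound `d_j² ≤ (N⁻¹)_jj`.

One vector `d = ((2 + 2√2) b, (3 + 2√2) b²)` serves both coordinates: in the variable
`v = -b / (t - b) ∈ (0, 1]` we get `d ⬝ f(t) = (3 + 2√2) v² - (2 + 2√2) v`, a quadratic that
equioscillates between `1` at `v = 1` (`t = 0`) and `-1` at `v = √2 - 1` (`t = -√2 b`). Both
designs live on these two points, and a direct computation shows that they attain `d₀²` and
`d₁²` respectively.
-/

open Matrix Finset

structure Design where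
  support : Finset ℝ
  weight : ℝ → ℝ
  pos : ∀ t ∈ support, 0 < weight t
  zero : ∀ t ∉ support, weight t = 0
  sum_one : ∑ t ∈ support, weight t = 1

noncomputable def Design.infoMatrix {m : ℕ} (ξ : Design) (f : ℝ → Fin m → ℝ) :
    Matrix (Fin m) (Fin m) ℝ :=
  ∑ t ∈ ξ.support, ξ.weight t • Matrix.vecMulVec (f t) (f t)

theorem Matrix.PosSemidef.sq_dotProduct_le {n : Type*} [Fintype n] [DecidableEq n]
    {M : Matrix n n ℝ} (hM : M.PosSemidef) (hdet : IsUnit M.det) (c d : n → ℝ) :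
    (c ⬝ᵥ d) ^ 2 ≤ (c ⬝ᵥ (M⁻¹ *ᵥ c)) * (d ⬝ᵥ (M *ᵥ d)) := by
  set x := M⁻¹ *ᵥ c
  have hx : M *ᵥ x = c := by simp [x, mulVec_mulVec, mul_nonsing_inv M hdet]
  have hMt : Mᵀ = M := by simpa using hM.isHermitian.eq
  have hsymm (y z : n → ℝ) : y ⬝ᵥ (M *ᵥ z) = (M *ᵥ y) ⬝ᵥ z := by
    rw [dotProduct_comm (M *ᵥ y), dotProduct_mulVec, ← mulVec_transpose, hMt, dotProduct_comm]
  have hCS := (toBilin' M).apply_sq_le_of_symm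
    (fun y => by simpa [toBilin'_apply'] using hM.dotProduct_mulVec_nonneg y)
    (LinearMap.isSymm_def.mpr fun y z => by simp [toBilin'_apply', hsymm y z, dotProduct_comm])
    x d
  simp only [toBilin'_apply'] at hCS
  rwa [hsymm x d, hsymm x x, hx] at hCS

theorem Matrix.inv_apply_zero_zero_fin_two {K : Type*} [Field K] (A : Matrix (Fin 2) (Fin 2) K) :
    A⁻¹ 0 0 = A 1 1 / A.det := by
  simp [inv_def, adjugate_fin_two, div_eq_inv_mul]

theorem Matrix.inv_apply_one_one_fin_two {K : Type*} [Field K] (A : Matrix (Fin 2) (Fin 2) K) :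
    A⁻¹ 1 1 = A 0 0 / A.det := by
  simp [inv_def, adjugate_fin_two, div_eq_inv_mul]

namespace Design

variable {m : ℕ} (η : Design) (f : ℝ → Fin m → ℝ)

theorem posSemidef_infoMatrix : (η.infoMatrix f).PosSemidef :=
  posSemidef_sum _ fun t ht => (posSemidef_vecMulVec_self_star (f t)).smul (η.pos t ht).le

theorem dotProduct_infoMatrix_mulVec_self (d : Fin m → ℝ) :
    d ⬝ᵥ (η.infoMatrix f *ᵥ d) = ∑ t ∈ η.support, η.weight t * (d ⬝ᵥ f t) ^ 2 := by
  simp only [infoMatrix, sum_mulVec, dotProduct_sum, smul_mulVec, dotProduct_smul,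
    vecMulVec_mulVec, smul_eq_mul]
  refine sum_congr rfl fun t _ => ?_
  rw [op_smul_eq_mul, dotProduct_comm (f t), sq]

theorem sq_apply_le_inv_apply (hN : IsUnit (η.infoMatrix f).det) {d : Fin m → ℝ}
    (hd : ∀ t ∈ η.support, (d ⬝ᵥ f t) ^ 2 ≤ 1) (j : Fin m) :
    d j ^ 2 ≤ (η.infoMatrix f)⁻¹ j j := by
  have hquad_le : d ⬝ᵥ (η.infoMatrix f *ᵥ d) ≤ 1 := by
    rw [dotProduct_infoMatrix_mulVec_self, ← η.sum_one]
    exact sum_le_sum fun t ht => mul_le_of_le_one_right (η.pos t ht).le (hd t ht)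
  have hCS := (η.posSemidef_infoMatrix f).sq_dotProduct_le hN (Pi.single j 1) d
  rw [single_one_dotProduct, single_one_dotProduct, mulVec_single_one] at hCS
  calc d j ^ 2 ≤ (η.infoMatrix f)⁻¹ j j * (d ⬝ᵥ (η.infoMatrix f *ᵥ d)) := hCS
    _ ≤ (η.infoMatrix f)⁻¹ j j :=
      mul_le_of_le_one_right (η.posSemidef_infoMatrix f).inv.diag_nonneg hquad_le

end Design

theorem sq_equioscillating_quadratic_le_one {v : ℝ} (h₀ : 0 ≤ v) (h₁ : v ≤ 1) :
    ((3 + 2 * √2) * v ^ 2 - (2 + 2 * √2) * v) ^ 2 ≤ 1 := by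
  have hr : √2 ^ 2 = 2 := Real.sq_sqrt zero_le_two
  have hfactor : 1 - ((3 + 2 * √2) * v ^ 2 - (2 + 2 * √2) * v) ^ 2
      = (1 - v) * (1 - (1 + √2) * v) ^ 2 * (1 + (3 + 2 * √2) * v) := by
    linear_combination (-v ^ 2 - 2 * v ^ 3 + 3 * v ^ 4 - 2 * √2 * v ^ 3 + 2 * √2 * v ^ 4) * hr
  rw [← sub_nonneg, hfactor]
  have := Real.sqrt_nonneg 2
  exact mul_nonneg (mul_nonneg (by linarith) (sq_nonneg _)) (by nlinarith)

theorem sq_dotProduct_regressor_le_one {b t : ℝ} (hb : b < 0) (ht : 0 ≤ t) :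
    (![(2 + 2 * √2) * b, (3 + 2 * √2) * b ^ 2] ⬝ᵥ ![(t - b)⁻¹, ((t - b) ^ 2)⁻¹]) ^ 2 ≤ 1 := by
  have hs : 0 < t - b := by linarith
  convert sq_equioscillating_quadratic_le_one (v := -b / (t - b)) (div_nonneg (by linarith) hs.le)
    ((div_le_one hs).mpr (by linarith)) using 2
  simp [dotProduct, Fin.sum_univ_two]
  field_simp
  ring

section TwoPoint

variable {K : Type*} [Field K] (w₀ w₁ u v : K)

/-- The information matrix of a two-point design, written through the values `u`, `v` of
`1 / (t - b)` at its support points. -/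
def twoPointMatrix : Matrix (Fin 2) (Fin 2) K :=
  w₀ • vecMulVec ![u, u ^ 2] ![u, u ^ 2] + w₁ • vecMulVec ![v, v ^ 2] ![v, v ^ 2]

theorem twoPointMatrix_apply_zero_zero :
    twoPointMatrix w₀ w₁ u v 0 0 = w₀ * u ^ 2 + w₁ * v ^ 2 := by
  simp [twoPointMatrix, sq]

theorem twoPointMatrix_apply_one_one :
    twoPointMatrix w₀ w₁ u v 1 1 = w₀ * u ^ 4 + w₁ * v ^ 4 := by
  simp [twoPointMatrix]
  ring

theorem det_twoPointMatrix :
    (twoPointMatrix w₀ w₁ u v).det = w₀ * w₁ * (u * v * (v - u)) ^ 2 := by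
  simp [twoPointMatrix, det_fin_two]
  ring

theorem det_twoPointMatrix_ne_zero (hw₀ : w₀ ≠ 0) (hw₁ : w₁ ≠ 0) (hu : u ≠ 0) (hv : v ≠ 0)
    (huv : u ≠ v) : (twoPointMatrix w₀ w₁ u v).det ≠ 0 := by
  rw [det_twoPointMatrix]
  simp [hw₀, hw₁, hu, hv, sub_eq_zero, Ne.symm huv]

end TwoPoint

theorem det_twoPointMatrix_sqrt_two_ne_zero {w₀ w₁ b : ℝ} (hw₀ : w₀ ≠ 0) (hw₁ : w₁ ≠ 0)
    (hb : b ≠ 0) : (twoPointMatrix w₀ w₁ (-b)⁻¹ ((√2 - 1) * (-b)⁻¹)).det ≠ 0 := by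
  have hu : (-b)⁻¹ ≠ 0 := by simpa using hb
  have h1 : 1 < √2 := Real.one_lt_sqrt_two
  have h2 : √2 < 2 := by nlinarith [Real.sq_sqrt zero_le_two]
  refine det_twoPointMatrix_ne_zero _ _ _ _ hw₀ hw₁ hu (mul_ne_zero (by linarith) hu) ?_
  rw [Ne, eq_comm, mul_eq_right₀ hu]
  linarith

theorem isUnit_det_twoPointMatrix_sqrt_two_and_inv_apply_zero_zero {b : ℝ} (hb : b ≠ 0) :
    IsUnit (twoPointMatrix ((2 - √2) / 4) ((2 + √2) / 4) (-b)⁻¹ ((√2 - 1) * (-b)⁻¹)).det ∧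
    (twoPointMatrix ((2 - √2) / 4) ((2 + √2) / 4) (-b)⁻¹ ((√2 - 1) * (-b)⁻¹))⁻¹ 0 0
      = ((2 + 2 * √2) * b) ^ 2 := by
  have hr : √2 ^ 2 = 2 := Real.sq_sqrt zero_le_two
  have hw₀ : (2 - √2) / 4 ≠ 0 := by
    have : √2 < 2 := by nlinarith [Real.sqrt_nonneg 2]
    exact (div_pos (sub_pos.mpr this) four_pos).ne'
  have hdet := det_twoPointMatrix_sqrt_two_ne_zero (w₁ := (2 + √2) / 4) hw₀ (by positivity) hb
  refine ⟨hdet.isUnit, ?_⟩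
  rw [inv_apply_zero_zero_fin_two, div_eq_iff hdet, twoPointMatrix_apply_one_one,
    det_twoPointMatrix]
  field_simp
  linear_combination (24 - 16 * √2 - 68 * √2 ^ 2 + 68 * √2 ^ 3 - 16 * √2 ^ 5 + 4 * √2 ^ 6) * hr

theorem isUnit_det_twoPointMatrix_sqrt_two_and_inv_apply_one_one {b : ℝ} (hb : b ≠ 0) :
    IsUnit (twoPointMatrix (1 - 1 / √2) (1 / √2) (-b)⁻¹ ((√2 - 1) * (-b)⁻¹)).det ∧
    (twoPointMatrix (1 - 1 / √2) (1 / √2) (-b)⁻¹ ((√2 - 1) * (-b)⁻¹))⁻¹ 1 1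
      = ((3 + 2 * √2) * b ^ 2) ^ 2 := by
  have hr : √2 ^ 2 = 2 := Real.sq_sqrt zero_le_two
  have hw₀ : 1 - 1 / √2 ≠ 0 :=
    (sub_pos.mpr ((div_lt_one (by positivity)).mpr Real.one_lt_sqrt_two)).ne'
  have hdet := det_twoPointMatrix_sqrt_two_ne_zero (w₁ := 1 / √2) hw₀ (by positivity) hb
  refine ⟨hdet.isUnit, ?_⟩
  rw [inv_apply_one_one_fin_two, div_eq_iff hdet, twoPointMatrix_apply_zero_zero,
    det_twoPointMatrix]
  field_simp
  linear_combination (-18 + 48 * √2 - 33 * √2 ^ 2 - 9 * √2 ^ 3 + 16 * √2 ^ 4 - 4 * √2 ^ 5) * hr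

/-- for `b < 0` and `f(t) = (1/(t−b), 1/(t−b)²)ᵀ` on `[0,∞)`:
(i) the design with masses `(2−√2)/4, (2+√2)/4` at `0, √2|b|` minimizes the
`(1,1)` entry of `M(ξ)⁻¹`; (ii) the design with masses `1−1/√2, 1/√2` at
`0, √2|b|` minimizes the `(2,2)` entry of `M(ξ)⁻¹`, in each case among all designs
with invertible information matrix. -/
theorem stmt19 (b : ℝ) (hb : b < 0)
    (f : ℝ → Fin 2 → ℝ) (hf : f = fun t => ![(t - b)⁻¹, ((t - b) ^ 2)⁻¹])
    (M₁ M₂ : Matrix (Fin 2) (Fin 2) ℝ)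
    (hM₁ : M₁ = ((2 - Real.sqrt 2) / 4) • Matrix.vecMulVec (f 0) (f 0) +
      ((2 + Real.sqrt 2) / 4) • Matrix.vecMulVec (f (-(Real.sqrt 2) * b))
        (f (-(Real.sqrt 2) * b)))
    (hM₂ : M₂ = (1 - 1 / Real.sqrt 2) • Matrix.vecMulVec (f 0) (f 0) +
      (1 / Real.sqrt 2) • Matrix.vecMulVec (f (-(Real.sqrt 2) * b))
        (f (-(Real.sqrt 2) * b))) :
    (IsUnit M₁.det ∧ ∀ η : Design, ↑η.support ⊆ Set.Ici (0 : ℝ) →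
      IsUnit (η.infoMatrix f).det → M₁⁻¹ 0 0 ≤ ((η.infoMatrix f)⁻¹) 0 0) ∧
    (IsUnit M₂.det ∧ ∀ η : Design, ↑η.support ⊆ Set.Ici (0 : ℝ) →
      IsUnit (η.infoMatrix f).det → M₂⁻¹ 1 1 ≤ ((η.infoMatrix f)⁻¹) 1 1) := by
  have hinv : (-√2 * b - b)⁻¹ = (√2 - 1) * (-b)⁻¹ := by
    have : (1 + √2) * (√2 - 1) = 1 := by linear_combination Real.sq_sqrt zero_le_two
    rw [show -√2 * b - b = (1 + √2) * -b by ring, mul_inv, inv_eq_of_mul_eq_one_right this]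
  have hf₀ : f 0 = ![(-b)⁻¹, (-b)⁻¹ ^ 2] := by simp [hf, inv_pow]
  have hf₁ : f (-√2 * b) = ![(√2 - 1) * (-b)⁻¹, ((√2 - 1) * (-b)⁻¹) ^ 2] := by
    rw [hf, ← hinv, inv_pow]
  rw [hf₀, hf₁] at hM₁ hM₂
  obtain ⟨hM₁det, hM₁inv⟩ := isUnit_det_twoPointMatrix_sqrt_two_and_inv_apply_zero_zero hb.ne
  obtain ⟨hM₂det, hM₂inv⟩ := isUnit_det_twoPointMatrix_sqrt_two_and_inv_apply_one_one hb.ne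
  have hbound (η : Design) (hη : ↑η.support ⊆ Set.Ici (0 : ℝ)) (hN : IsUnit (η.infoMatrix f).det)
      (j : Fin 2) : ![(2 + 2 * √2) * b, (3 + 2 * √2) * b ^ 2] j ^ 2 ≤ (η.infoMatrix f)⁻¹ j j :=
    η.sq_apply_le_inv_apply f hN
      (fun t ht => by simpa [hf] using sq_dotProduct_regressor_le_one hb (hη ht)) j
  refine ⟨⟨hM₁ ▸ hM₁det, fun η hη hN => ?_⟩, ⟨hM₂ ▸ hM₂det, fun η hη hN => ?_⟩⟩
  · rw [hM₁, ← twoPointMatrix, hM₁inv]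
    exact hbound η hη hN 0
  · rw [hM₂, ← twoPointMatrix, hM₂inv]
    exact hbound η hη hN 1
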